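/- arXiv:1903.07060 — 2 statements merged into one kernel-verified Lean document; each statement's English description precedes it below -/
import Mathlib

section
/- Let φ_n[1] denote the number of arrowhead-plus-tridiagonal matrices Φ_n over F_2 having rank exactly 1. Then φ_n[1] = 4n - 5 for all n ≥ 2. -/
open Matrix


open Polynomial

/-- The `n × n` "arrowhead-plus-tridiagonal" matrix `Φ_n` over `F_2`:
first row/column `(x_0, z_1, …, z_{n-1})`, lower-right block symmetric tridiagonal
with diagonal `(x_1, …, x_{n-1})` and off-diagonal `(y_1, …, y_{n-2})`. -/
def phiMat (n : ℕ) (x : Fin n → ZMod 2) (y : Fin (n-2) → ZMod 2)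
    (zv : Fin (n-1) → ZMod 2) : Matrix (Fin n) (Fin n) (ZMod 2) :=
  Matrix.of fun i j =>
    if h0 : i.val = 0 ∧ j.val = 0 then x i
    else if hi : i.val = 0 then zv ⟨j.val - 1, by have := j.isLt; omega⟩
    else if hj : j.val = 0 then zv ⟨i.val - 1, by have := i.isLt; omega⟩
    else if i = j then x i
    else if hij : i.val + 1 = j.val then y ⟨i.val - 1, by have := j.isLt; omega⟩
    else if hji : j.val + 1 = i.val then y ⟨j.val - 1, by have := i.isLt; omega⟩
    else 0

def outerM {n : ℕ} (v : Fin n → ZMod 2) : Matrix (Fin n) (Fin n) (ZMod 2) :=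
  Matrix.of fun i j => v i * v j

lemma zmod2_mul_self : ∀ a : ZMod 2, a * a = a := by decide

lemma zmod2_eq_one : ∀ a : ZMod 2, a ≠ 0 → a = 1 := by decide

lemma zmod2_mul_eq_zero : ∀ a b : ZMod 2, a * b = 0 → a = 0 ∨ b = 0 := by decide

lemma span_outer {n : ℕ} {v : Fin n → ZMod 2} (hv : v ≠ 0) :
    Submodule.span (ZMod 2) (Set.range (outerM v)ᵀ) = Submodule.span (ZMod 2) {v} := by
  apply le_antisymm
  · rw [Submodule.span_le]
    rintro _ ⟨j, rfl⟩
    have : (outerM v)ᵀ j = v j • v := by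
      funext i
      simp [outerM, Matrix.transpose_apply, Matrix.of_apply, mul_comm]
    rw [this]
    exact Submodule.smul_mem _ _ (Submodule.mem_span_singleton_self v)
  · rw [Submodule.span_le, Set.singleton_subset_iff]
    obtain ⟨j0, hj0⟩ : ∃ j0, v j0 ≠ 0 := Function.ne_iff.mp hv
    have : v = (outerM v)ᵀ j0 := by
      funext i
      simp [outerM, Matrix.transpose_apply, Matrix.of_apply, zmod2_eq_one _ hj0]
    exact Submodule.subset_span ⟨j0, this.symm⟩

lemma rank_outer {n : ℕ} {v : Fin n → ZMod 2} (hv : v ≠ 0) : (outerM v).rank = 1 := by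
  rw [Matrix.rank_eq_finrank_span_cols, show (outerM v).col = (outerM v)ᵀ from rfl, span_outer hv]
  exact finrank_span_singleton hv

lemma minor_of_rank_one {n : ℕ} {M : Matrix (Fin n) (Fin n) (ZMod 2)} (h : M.rank = 1) :
    ∀ i j k l, M i j * M k l = M i l * M k j := by
  rw [Matrix.rank_eq_finrank_span_cols] at h
  obtain ⟨v, hv0, hv⟩ := finrank_eq_one_iff'.mp h
  have key : ∀ j, ∃ c : ZMod 2, ∀ i, M i j = c * (v : Fin n → ZMod 2) i := by
    intro j
    obtain ⟨c, hc⟩ := hv ⟨Mᵀ j, Submodule.subset_span (Set.mem_range_self j)⟩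
    refine ⟨c, fun i => ?_⟩
    have h2 := congrFun (congrArg Subtype.val hc) i
    simpa [Matrix.transpose_apply] using h2.symm
  choose c hc using key
  intro i j k l
  rw [hc j i, hc l k, hc l i, hc j k]
  ring


section entries
variable {n : ℕ} (x : Fin n → ZMod 2) (y : Fin (n-2) → ZMod 2) (zv : Fin (n-1) → ZMod 2)

lemma phiMat_diag (i : Fin n) : phiMat n x y zv i i = x i := by
  simp only [phiMat, Matrix.of_apply]
  split_ifs with h1 h2 h3 h4 <;> first | rfl | omega

lemma phiMat_row0 (i j : Fin n) (hi : i.val = 0) (hj : j.val ≠ 0) :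
    phiMat n x y zv i j = zv ⟨j.val - 1, by have := j.isLt; omega⟩ := by
  simp only [phiMat, Matrix.of_apply]
  split_ifs with h1 h2 <;> first | rfl | omega

lemma phiMat_adj (i j : Fin n) (hi : i.val ≠ 0) (hij : i.val + 1 = j.val) :
    phiMat n x y zv i j = y ⟨i.val - 1, by have := j.isLt; omega⟩ := by
  have hine : i ≠ j := by simp [Fin.ext_iff]; omega
  simp only [phiMat, Matrix.of_apply]
  split_ifs with h1 h2 h3 h4 h5 <;> first | rfl | omega | exact absurd h4 hine

lemma phiMat_far (i j : Fin n) (hi : i.val ≠ 0) (hj : j.val ≠ 0)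
    (h : i.val + 2 ≤ j.val) : phiMat n x y zv i j = 0 := by
  have hine : i ≠ j := by simp [Fin.ext_iff]; omega
  simp only [phiMat, Matrix.of_apply]
  split_ifs with h1 h2 h3 h4 h5 h6 <;> first | rfl | omega | exact absurd h4 hine

lemma phiMat_symm : (phiMat n x y zv)ᵀ = phiMat n x y zv := by
  funext i j
  rw [Matrix.transpose_apply]
  simp only [phiMat, Matrix.of_apply]
  split_ifs <;>
    (try simp only [Fin.ext_iff] at *) <;>
    first
      | rfl
      | (congr 1; exact Fin.ext (by omega))
      | (exfalso; omega)

end entries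

def Px {n : ℕ} (x : Fin n → ZMod 2) : Prop :=
  ∀ i j : Fin n, i.val ≠ 0 → i.val + 2 ≤ j.val → x i * x j = 0

lemma rank_one_iff {n : ℕ} (hn : 2 ≤ n) (x : Fin n → ZMod 2) (y : Fin (n-2) → ZMod 2)
    (zv : Fin (n-1) → ZMod 2) :
    (phiMat n x y zv).rank = 1 ↔
      Px x ∧ x ≠ 0 ∧
      (∀ j : Fin (n-1), zv j = x ⟨0, by omega⟩ * x ⟨j.val + 1, by have := j.isLt; omega⟩) ∧
      (∀ i : Fin (n-2), y i = x ⟨i.val + 1, by have := i.isLt; omega⟩ *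
          x ⟨i.val + 2, by have := i.isLt; omega⟩) := by
  constructor
  · intro h
    have hsym : ∀ i j, phiMat n x y zv j i = phiMat n x y zv i j := fun i j =>
      (congrFun (congrFun (phiMat_symm x y zv) j) i).symm.trans
        (Matrix.transpose_apply _ j i)
    have hout : ∀ i j, phiMat n x y zv i j = x i * x j := by
      intro i j
      have h1 := minor_of_rank_one h i j j i
      rw [hsym i j, phiMat_diag, phiMat_diag] at h1
      calc phiMat n x y zv i j = phiMat n x y zv i j * phiMat n x y zv i j :=
            (zmod2_mul_self _).symm
        _ = x i * x j := h1
    have hxne : x ≠ 0 := by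
      rintro rfl
      have h0 : phiMat n 0 y zv = 0 := by
        funext i j; simpa using hout i j
      rw [h0, Matrix.rank_zero] at h
      exact zero_ne_one h
    refine ⟨fun i j hi hij => ?_, hxne, fun j => ?_, fun i => ?_⟩
    · rw [← hout, phiMat_far x y zv i j hi (by omega) hij]
    · have h1 := hout ⟨0, by omega⟩ ⟨j.val + 1, by have := j.isLt; omega⟩
      rw [phiMat_row0 x y zv ⟨0, by omega⟩ ⟨j.val + 1, by have := j.isLt; omega⟩ rfl
        (by simp)] at h1
      simpa using h1
    · have h1 := hout ⟨i.val + 1, by have := i.isLt; omega⟩ ⟨i.val + 2, by have := i.isLt; omega⟩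
      rw [phiMat_adj x y zv ⟨i.val + 1, by have := i.isLt; omega⟩
        ⟨i.val + 2, by have := i.isLt; omega⟩ (by simp) rfl] at h1
      simpa using h1
  · rintro ⟨hP, hxne, hz, hy⟩
    have heq : phiMat n x y zv = outerM x := by
      funext i j
      show phiMat n x y zv i j = x i * x j
      simp only [phiMat, Matrix.of_apply]
      split_ifs with h1 h2 h3 h4 h5 h6
      · have : i = j := Fin.ext (by omega)
        subst this
        rw [zmod2_mul_self]
      · rw [hz ⟨j.val - 1, by have := j.isLt; omega⟩]
        congr 1 <;> exact congrArg x (Fin.ext (by simp; omega))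
      · rw [hz ⟨i.val - 1, by have := i.isLt; omega⟩, mul_comm]
        congr 1 <;> exact congrArg x (Fin.ext (by simp; omega))
      · subst h4
        rw [zmod2_mul_self]
      · rw [hy ⟨i.val - 1, by have := j.isLt; omega⟩]
        congr 1 <;> exact congrArg x (Fin.ext (by simp; omega))
      · rw [hy ⟨j.val - 1, by have := i.isLt; omega⟩, mul_comm]
        congr 1 <;> exact congrArg x (Fin.ext (by simp; omega))
      · rcases lt_or_ge i.val j.val with hlt | hle
        · exact (hP i j h2 (by simp [Fin.ext_iff] at h4; omega)).symm
        · rw [mul_comm]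
          exact (hP j i h3 (by simp [Fin.ext_iff] at h4; omega)).symm
    rw [heq]
    exact rank_outer hxne

def enc {n : ℕ} (a : ZMod 2 × Option (Fin (n-1) ⊕ Fin (n-2))) : Fin n → ZMod 2 :=
  fun i =>
    match a.2 with
    | none => if i.val = 0 then a.1 else 0
    | some (Sum.inl j) => if i.val = 0 then a.1 else if i.val = j.val + 1 then 1 else 0
    | some (Sum.inr j) =>
        if i.val = 0 then a.1 else if i.val = j.val + 1 ∨ i.val = j.val + 2 then 1 else 0

lemma enc_P {n : ℕ} (a : ZMod 2 × Option (Fin (n-1) ⊕ Fin (n-2))) : Px (enc a) := by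
  intro i j hi hij
  rcases a with ⟨b, o⟩
  rcases o with _ | j1 | j2 <;>
    · simp only [enc]
      split_ifs <;> first | omega | simp

lemma enc_zero {n : ℕ} (b : ZMod 2) (o : Option (Fin (n-1) ⊕ Fin (n-2))) (i : Fin n)
    (hi : i.val = 0) : enc (b, o) i = b := by
  rcases o with _ | j | j <;> simp [enc, hi]

lemma enc_none {n : ℕ} (b : ZMod 2) (i : Fin n) (hi : i.val ≠ 0) : enc (b, none) i = 0 := by
  simp [enc, hi]

lemma enc_inl {n : ℕ} (b : ZMod 2) (j : Fin (n-1)) (i : Fin n) (hi : i.val ≠ 0) :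
    enc (b, some (Sum.inl j)) i = if i.val = j.val + 1 then 1 else 0 := by
  simp [enc, hi]

lemma enc_inr {n : ℕ} (b : ZMod 2) (j : Fin (n-2)) (i : Fin n) (hi : i.val ≠ 0) :
    enc (b, some (Sum.inr j)) i = if i.val = j.val + 1 ∨ i.val = j.val + 2 then 1 else 0 := by
  simp [enc, hi]

lemma enc_inj {n : ℕ} (hn : 2 ≤ n) : Function.Injective (enc (n := n)) := by
  rintro ⟨b, o⟩ ⟨b', o'⟩ h
  have hb : b = b' := by
    have hb0 := congrFun h ⟨0, by omega⟩
    rwa [enc_zero b o _ rfl, enc_zero b' o' _ rfl] at hb0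
  subst hb
  suffices ho : o = o' by rw [ho]
  have hone : (1 : ZMod 2) ≠ 0 := by decide
  rcases o with _ | j | j <;> rcases o' with _ | j' | j'
  · rfl
  · have h1 := congrFun h ⟨j'.val + 1, by have := j'.isLt; omega⟩
    rw [enc_none _ _ (by simp), enc_inl _ _ _ (by simp), if_pos rfl] at h1
    exact absurd h1.symm hone
  · have h1 := congrFun h ⟨j'.val + 1, by have := j'.isLt; omega⟩
    rw [enc_none _ _ (by simp), enc_inr _ _ _ (by simp), if_pos (Or.inl rfl)] at h1
    exact absurd h1.symm hone
  · have h1 := congrFun h ⟨j.val + 1, by have := j.isLt; omega⟩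
    rw [enc_none _ _ (by simp), enc_inl _ _ _ (by simp), if_pos rfl] at h1
    exact absurd h1 hone
  · have hjj : j.val + 1 = j'.val + 1 := by
      by_contra c
      have h1 := congrFun h ⟨j.val + 1, by have := j.isLt; omega⟩
      rw [enc_inl _ _ _ (by simp), enc_inl _ _ _ (by simp), if_pos rfl, if_neg c] at h1
      exact absurd h1 hone
    rw [Fin.ext (by omega : j.val = j'.val)]
  · have d1 : j'.val + 1 = j.val + 1 := by
      by_contra c
      have h1 := congrFun h ⟨j'.val + 1, by have := j'.isLt; omega⟩
      rw [enc_inl _ _ _ (by simp), enc_inr _ _ _ (by simp), if_pos (Or.inl rfl), if_neg c] at h1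
      exact absurd h1.symm hone
    have d2 : j'.val + 2 = j.val + 1 := by
      by_contra c
      have h2 := congrFun h ⟨j'.val + 2, by have := j'.isLt; omega⟩
      rw [enc_inl _ _ _ (by simp), enc_inr _ _ _ (by simp), if_pos (Or.inr rfl), if_neg c] at h2
      exact absurd h2.symm hone
    omega
  · have h1 := congrFun h ⟨j.val + 1, by have := j.isLt; omega⟩
    rw [enc_none _ _ (by simp), enc_inr _ _ _ (by simp), if_pos (Or.inl rfl)] at h1
    exact absurd h1 hone
  · have d1 : j.val + 1 = j'.val + 1 := by
      by_contra c
      have h1 := congrFun h ⟨j.val + 1, by have := j.isLt; omega⟩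
      rw [enc_inl _ _ _ (by simp), enc_inr _ _ _ (by simp), if_pos (Or.inl rfl), if_neg c] at h1
      exact absurd h1 hone
    have d2 : j.val + 2 = j'.val + 1 := by
      by_contra c
      have h2 := congrFun h ⟨j.val + 2, by have := j.isLt; omega⟩
      rw [enc_inl _ _ _ (by simp), enc_inr _ _ _ (by simp), if_pos (Or.inr rfl), if_neg c] at h2
      exact absurd h2 hone
    omega
  · have d1 : j.val + 1 = j'.val + 1 ∨ j.val + 1 = j'.val + 2 := by
      by_contra c
      have h1 := congrFun h ⟨j.val + 1, by have := j.isLt; omega⟩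
      rw [enc_inr _ _ _ (by simp), enc_inr _ _ _ (by simp), if_pos (Or.inl rfl), if_neg c] at h1
      exact absurd h1 hone
    have d2 : j'.val + 1 = j.val + 1 ∨ j'.val + 1 = j.val + 2 := by
      by_contra c
      have h2 := congrFun h ⟨j'.val + 1, by have := j'.isLt; omega⟩
      rw [enc_inr _ _ _ (by simp), enc_inr _ _ _ (by simp), if_pos (Or.inl rfl), if_neg c] at h2
      exact absurd h2.symm hone
    rw [Fin.ext (by omega : j.val = j'.val)]

lemma enc_surj {n : ℕ} (hn : 2 ≤ n) (x : Fin n → ZMod 2) (hP : Px x) :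
    ∃ a, enc a = x := by
  classical
  set T : Finset (Fin n) := Finset.univ.filter (fun i => i.val ≠ 0 ∧ x i ≠ 0) with hT
  have hmemT : ∀ i : Fin n, i ∈ T ↔ (i.val ≠ 0 ∧ x i ≠ 0) := by
    intro i; simp [hT]
  by_cases hTe : T = ∅
  · refine ⟨(x ⟨0, by omega⟩, none), funext fun i => ?_⟩
    by_cases hi : i.val = 0
    · rw [enc_zero _ _ _ hi]
      congr 1
      exact Fin.ext hi.symm
    · rw [enc_none _ _ hi]
      by_contra hx
      have : i ∈ T := (hmemT i).mpr ⟨hi, fun hh => hx hh.symm⟩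
      rw [hTe] at this
      exact absurd this (Finset.notMem_empty i)
  · have hTne : T.Nonempty := Finset.nonempty_iff_ne_empty.mpr hTe
    set j := T.min' hTne with hj
    set k := T.max' hTne with hk
    have hjT : j ∈ T := T.min'_mem hTne
    have hkT : k ∈ T := T.max'_mem hTne
    have hjk : j ≤ k := T.min'_le k hkT
    have hj0 : j.val ≠ 0 := ((hmemT j).mp hjT).1
    have hxj : x j ≠ 0 := ((hmemT j).mp hjT).2
    have hxk : x k ≠ 0 := ((hmemT k).mp hkT).2
    have hkj : k.val ≤ j.val + 1 := by
      by_contra hc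
      have := hP j k hj0 (by omega)
      rcases zmod2_mul_eq_zero _ _ this with h' | h' <;> tauto
    have hbound : ∀ i : Fin n, i.val ≠ 0 → x i ≠ 0 → (j.val ≤ i.val ∧ i.val ≤ k.val) := by
      intro i hi hx
      have hiT : i ∈ T := (hmemT i).mpr ⟨hi, hx⟩
      exact ⟨T.min'_le i hiT, T.le_max' i hiT⟩
    by_cases hjkeq : j = k
    · -- singleton support
      refine ⟨(x ⟨0, by omega⟩, some (Sum.inl ⟨j.val - 1, by have := j.isLt; omega⟩)),
        funext fun i => ?_⟩
      by_cases hi : i.val = 0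
      · rw [enc_zero _ _ _ hi]; congr 1; exact Fin.ext hi.symm
      · rw [enc_inl _ _ _ hi]
        by_cases hij : i.val = (j.val - 1) + 1
        · rw [if_pos hij]
          have : i = j := Fin.ext (by omega)
          subst this
          exact (zmod2_eq_one _ hxj).symm
        · rw [if_neg hij]
          by_contra hx
          have hb := hbound i hi (fun hh => hx hh.symm)
          rw [← hjkeq] at hb
          omega
    · -- double support, k = j + 1
      have hkval : k.val = j.val + 1 := by
        have : j.val ≠ k.val := fun hh => hjkeq (Fin.ext hh)
        have : j.val ≤ k.val := hjk
        omega
      refine ⟨(x ⟨0, by omega⟩, some (Sum.inr ⟨j.val - 1, by have := k.isLt; omega⟩)),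
        funext fun i => ?_⟩
      by_cases hi : i.val = 0
      · rw [enc_zero _ _ _ hi]; congr 1; exact Fin.ext hi.symm
      · rw [enc_inr _ _ _ hi]
        by_cases hij : i.val = (j.val - 1) + 1 ∨ i.val = (j.val - 1) + 2
        · rw [if_pos hij]
          rcases hij with hij | hij
          · have : i = j := Fin.ext (by omega)
            subst this
            exact (zmod2_eq_one _ hxj).symm
          · have : i = k := Fin.ext (by omega)
            subst this
            exact (zmod2_eq_one _ hxk).symm
        · rw [if_neg hij]
          by_contra hx
          have hb := hbound i hi (fun hh => hx hh.symm)
          omega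

lemma enc_zero_none {n : ℕ} : enc (n := n) (0, none) = 0 := by
  funext i
  by_cases hi : i.val = 0
  · rw [enc_zero _ _ _ hi]; rfl
  · rw [enc_none _ _ hi]; rfl

lemma enc_ne_zero {n : ℕ} (hn : 2 ≤ n) (a : ZMod 2 × Option (Fin (n-1) ⊕ Fin (n-2)))
    (ha : a ≠ (0, none)) : enc a ≠ 0 := by
  obtain ⟨b, o⟩ := a
  rcases o with _ | j | j
  · have hb : b ≠ 0 := fun hh => ha (by rw [hh])
    intro hx
    apply hb
    have := congrFun hx ⟨0, by omega⟩
    rwa [enc_zero _ _ _ rfl, Pi.zero_apply] at this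
  · intro hx
    have := congrFun hx ⟨j.val + 1, by have := j.isLt; omega⟩
    rw [enc_inl _ _ _ (by simp), if_pos rfl, Pi.zero_apply] at this
    exact absurd this (by decide)
  · intro hx
    have := congrFun hx ⟨j.val + 1, by have := j.isLt; omega⟩
    rw [enc_inr _ _ _ (by simp), if_pos (Or.inl rfl), Pi.zero_apply] at this
    exact absurd this (by decide)

noncomputable def encEquiv {n : ℕ} (hn : 2 ≤ n) :
    {a : ZMod 2 × Option (Fin (n-1) ⊕ Fin (n-2)) // a ≠ (0, none)} ≃
      {x : Fin n → ZMod 2 // Px x ∧ x ≠ 0} := by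
  apply Equiv.ofBijective (fun a => ⟨enc a.1, enc_P a.1, enc_ne_zero hn a.1 a.2⟩)
  constructor
  · rintro ⟨a, ha⟩ ⟨a', ha'⟩ hh
    exact Subtype.ext (enc_inj hn (congrArg Subtype.val hh))
  · rintro ⟨x, hP, hx⟩
    obtain ⟨a, ha⟩ := enc_surj hn x hP
    refine ⟨⟨a, fun hh => ?_⟩, Subtype.ext ha⟩
    rw [hh, enc_zero_none] at ha
    exact hx ha.symm

noncomputable def mainEquiv {n : ℕ} (hn : 2 ≤ n) :
    {p : (Fin n → ZMod 2) × (Fin (n-2) → ZMod 2) × (Fin (n-1) → ZMod 2) //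
      (phiMat n p.1 p.2.1 p.2.2).rank = 1} ≃ {x : Fin n → ZMod 2 // Px x ∧ x ≠ 0} where
  toFun p :=
    ⟨p.1.1, ((rank_one_iff hn _ _ _).mp p.2).1, ((rank_one_iff hn _ _ _).mp p.2).2.1⟩
  invFun x :=
    ⟨(x.1, fun i => x.1 ⟨i.val + 1, by have := i.isLt; omega⟩ *
        x.1 ⟨i.val + 2, by have := i.isLt; omega⟩,
      fun j => x.1 ⟨0, by omega⟩ * x.1 ⟨j.val + 1, by have := j.isLt; omega⟩),
      (rank_one_iff hn _ _ _).mpr ⟨x.2.1, x.2.2, fun j => rfl, fun i => rfl⟩⟩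
  left_inv p := by
    obtain ⟨⟨x, y, zv⟩, hp⟩ := p
    obtain ⟨hP, hx, hz, hy⟩ := (rank_one_iff hn _ _ _).mp hp
    exact Subtype.ext (Prod.ext rfl (Prod.ext (funext fun i => (hy i).symm)
      (funext fun j => (hz j).symm)))
  right_inv x := rfl


/-- `phiCount n j` : the number of matrices `Φ_n` over `F_2` of rank exactly `j`. -/
noncomputable def phiCount (n j : ℕ) : ℕ :=
  Nat.card {p : (Fin n → ZMod 2) × (Fin (n-2) → ZMod 2) × (Fin (n-1) → ZMod 2) //
    (phiMat n p.1 p.2.1 p.2.2).rank = j}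

/-- The rank-generating polynomial `φ_n(z)`. -/
noncomputable def phiPoly (n : ℕ) : Polynomial ℤ :=
  ∑ j ∈ Finset.range (n+1), Polynomial.C (phiCount n j : ℤ) * Polynomial.X ^ j

/-- For all `n ≥ 2`, the number of matrices `Φ_n` over `F_2` of rank exactly `1`
is `4n - 5`. -/
theorem phiCount_rank_one : ∀ n : ℕ, 2 ≤ n → phiCount n 1 = 4 * n - 5 := by
  intro n hn
  unfold phiCount
  rw [Nat.card_congr ((mainEquiv hn).trans (encEquiv hn).symm), Nat.card_eq_fintype_card]
  have h1 : Fintype.card {a : ZMod 2 × Option (Fin (n-1) ⊕ Fin (n-2)) // a ≠ (0, none)} =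
      Fintype.card (ZMod 2 × Option (Fin (n-1) ⊕ Fin (n-2))) -
        Fintype.card {a : ZMod 2 × Option (Fin (n-1) ⊕ Fin (n-2)) // a = (0, none)} :=
    Fintype.card_subtype_compl _
  rw [h1, Fintype.card_subtype_eq]
  simp only [Fintype.card_prod, Fintype.card_option, Fintype.card_sum, Fintype.card_fin,
    ZMod.card]
  omega
end

section
/- Define polynomials E_{m_1,m_2}(z) by the recurrence E_{m_1,m_2}(z) = (1+4z)E_{m_1,m_2-1}(z) + 16z²E_{m_1,m_2-2}(z) + 2^{m_2+3}z²λ_{m_1,m_2-1}(z) for m_2 ≥ 2, with E_{m_1,0}(z) = 2φ_{m_1+2}(z) and E_{m_1,1}(z) = 2φ_{m_1+3}(z), where λ_{m_1,m_2}(z) = (1+2z)λ_{m_1,m_2-1}(z) + 4z²λ_{m_1,m_2-2}(z) for m_2 ≥ 2, with λ_{m_1,0}(z) = φ_{m_1+1}(z) and λ_{m_1,1}(z) = (1+2z)φ_{m_1+1}(z) + 2^{m_1+1}z²L_{m_1}(z). Then the coefficient of z^1 in E_{m_1,m_2}(z) equals 8(m_1 + m_2 + 2) - 10 for all m_1, m_2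 ≥ 1. -/
open Polynomial

lemma cXsq_coeff_one (p : Polynomial ℤ) (c : ℤ) : (C c * X^2 * p).coeff 1 = 0 := by
  rw [mul_assoc, coeff_C_mul, pow_two, mul_assoc, coeff_X_mul]
  simp [mul_coeff_zero]

lemma cXsq_coeff_zero (p : Polynomial ℤ) (c : ℤ) : (C c * X^2 * p).coeff 0 = 0 := by
  simp [mul_assoc, coeff_C_mul, mul_coeff_zero]

lemma one4X_coeff_one (p : Polynomial ℤ) :
    ((1+4*X)*p).coeff 1 = p.coeff 1 + 4 * p.coeff 0 := by
  rw [add_mul, one_mul, coeff_add, mul_assoc]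
  norm_num [coeff_X_mul]

lemma one4X_coeff_zero (p : Polynomial ℤ) : ((1+4*X)*p).coeff 0 = p.coeff 0 := by
  simp [add_mul, mul_assoc, mul_coeff_zero]

lemma sixteenXsq_coeff_one (p : Polynomial ℤ) : (16*X^2*p).coeff 1 = 0 := by
  rw [mul_assoc, pow_two, mul_assoc]
  norm_num [coeff_X_mul, mul_coeff_zero]

lemma sixteenXsq_coeff_zero (p : Polynomial ℤ) : (16*X^2*p).coeff 0 = 0 := by
  simp [mul_assoc, mul_coeff_zero]

lemma two_mul_coeff (p : Polynomial ℤ) (n : ℕ) : ((2:Polynomial ℤ) * p).coeff n = 2 * p.coeff n := by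
  have : (2 : Polynomial ℤ) = C 2 := by norm_num
  rw [this, coeff_C_mul]

/-- The coefficient of `z` in the Euler-genus polynomial equals `8(m1+m2+2) - 10`. -/
theorem eulerGenus_coeff_one (L phi : ℕ → Polynomial ℤ) (lam E : ℕ → ℕ → Polynomial ℤ)
    (hL1 : L 1 = 1 + X) (hL2 : L 2 = 1 + 3 * X + 4 * X ^ 2)
    (hL : ∀ m : ℕ, 3 ≤ m → L m = (1 + 2 * X) * L (m - 1) + 4 * X ^ 2 * L (m - 2))
    (hphi2 : phi 2 = 1 + 3 * X + 4 * X ^ 2)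
    (hphi3 : phi 3 = 1 + 7 * X + 28 * X ^ 2 + 28 * X ^ 3)
    (hphi : ∀ m : ℕ, 3 ≤ m → phi (m + 1) = (1 + 4 * X) * phi m
      + 16 * X ^ 2 * phi (m - 1) + Polynomial.C ((2 : ℤ) ^ m) * X ^ 2 * L (m - 1))
    (hlam0 : ∀ m1 : ℕ, 1 ≤ m1 → lam m1 0 = phi (m1 + 1))
    (hlam1 : ∀ m1 : ℕ, 1 ≤ m1 → lam m1 1 = (1 + 2 * X) * phi (m1 + 1)
      + Polynomial.C ((2 : ℤ) ^ (m1 + 1)) * X ^ 2 * L m1)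
    (hlam : ∀ m1 : ℕ, 1 ≤ m1 → ∀ m2 : ℕ, 2 ≤ m2 →
      lam m1 m2 = (1 + 2 * X) * lam m1 (m2 - 1) + 4 * X ^ 2 * lam m1 (m2 - 2))
    (hE0 : ∀ m1 : ℕ, 1 ≤ m1 → E m1 0 = 2 * phi (m1 + 2))
    (hE1 : ∀ m1 : ℕ, 1 ≤ m1 → E m1 1 = 2 * phi (m1 + 3))
    (hE : ∀ m1 : ℕ, 1 ≤ m1 → ∀ m2 : ℕ, 2 ≤ m2 →
      E m1 m2 = (1 + 4 * X) * E m1 (m2 - 1) + 16 * X ^ 2 * E m1 (m2 - 2)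
        + Polynomial.C ((2 : ℤ) ^ (m2 + 3)) * X ^ 2 * lam m1 (m2 - 1)) :
    ∀ m1 : ℕ, 1 ≤ m1 → ∀ m2 : ℕ, 1 ≤ m2 →
      (E m1 m2).coeff 1 = 8 * ((m1 : ℤ) + (m2 : ℤ) + 2) - 10 := by
  -- coefficients of phi
  have hphiP : ∀ n : ℕ,
      ((phi (n+2)).coeff 0 = 1 ∧ (phi (n+2)).coeff 1 = 4*((n:ℤ)+2) - 5) ∧
      ((phi (n+3)).coeff 0 = 1 ∧ (phi (n+3)).coeff 1 = 4*((n:ℤ)+3) - 5) := by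
    intro n
    induction n with
    | zero =>
      refine ⟨⟨?_, ?_⟩, ?_, ?_⟩ <;> simp [hphi2, hphi3, coeff_one] <;> norm_num
    | succ k ih =>
      obtain ⟨⟨hk0', hk1'⟩, hk0, hk1⟩ := ih
      have hrec := hphi (k+3) (by omega)
      have h3 : k + 3 - 1 = k + 2 := by omega
      have h4 : k + 3 + 1 = k + 4 := by omega
      rw [h3, h4] at hrec
      constructor
      · constructor
        · rw [show k+1+2 = k+3 from rfl]; exact hk0
        · rw [show k+1+2 = k+3 from rfl, hk1]; push_cast; ring
      · constructor
        · rw [show k+1+3 = k+4 from rfl, hrec, coeff_add, coeff_add,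
            one4X_coeff_zero, sixteenXsq_coeff_zero, cXsq_coeff_zero, hk0]
          ring
        · rw [show k+1+3 = k+4 from rfl, hrec, coeff_add, coeff_add,
            one4X_coeff_one, sixteenXsq_coeff_one, cXsq_coeff_one, hk0, hk1]
          push_cast; ring
  have hPhi : ∀ m : ℕ, 2 ≤ m →
      (phi m).coeff 0 = 1 ∧ (phi m).coeff 1 = 4*(m:ℤ) - 5 := by
    intro m hm
    obtain ⟨k, rfl⟩ := Nat.exists_eq_add_of_le hm
    have := (hphiP k).1
    rw [show 2 + k = k + 2 from by omega]
    refine ⟨this.1, ?_⟩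
    rw [this.2]; push_cast; ring
  intro m1 hm1
  -- coefficients of E
  have hEP : ∀ n : ℕ,
      ((E m1 n).coeff 0 = 2 ∧ (E m1 n).coeff 1 = 8*((m1:ℤ)+(n:ℤ)+2) - 10) ∧
      ((E m1 (n+1)).coeff 0 = 2 ∧ (E m1 (n+1)).coeff 1 = 8*((m1:ℤ)+(n:ℤ)+3) - 10) := by
    intro n
    induction n with
    | zero =>
      obtain ⟨h20, h21⟩ := hPhi (m1+2) (by omega)
      obtain ⟨h30, h31⟩ := hPhi (m1+3) (by omega)
      refine ⟨⟨?_, ?_⟩, ?_, ?_⟩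
      · rw [hE0 m1 hm1, two_mul_coeff, h20]; ring
      · rw [hE0 m1 hm1, two_mul_coeff, h21]; push_cast; ring
      · rw [hE1 m1 hm1, two_mul_coeff, h30]; ring
      · rw [hE1 m1 hm1, two_mul_coeff, h31]; push_cast; ring
    | succ k ih =>
      obtain ⟨⟨_, _⟩, hk0, hk1⟩ := ih
      have hrec := hE m1 hm1 (k+2) (by omega)
      have h1 : k + 2 - 1 = k + 1 := by omega
      have h2 : k + 2 - 2 = k := by omega
      rw [h1, h2] at hrec
      refine ⟨⟨hk0, ?_⟩, ?_, ?_⟩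
      · rw [hk1]; push_cast; ring
      · rw [show k+1+1 = k+2 from rfl, hrec, coeff_add, coeff_add,
          one4X_coeff_zero, sixteenXsq_coeff_zero, cXsq_coeff_zero, hk0]
        ring
      · rw [show k+1+1 = k+2 from rfl, hrec, coeff_add, coeff_add,
          one4X_coeff_one, sixteenXsq_coeff_one, cXsq_coeff_one, hk0, hk1]
        push_cast; ring
  intro m2 hm2
  have := (hEP m2).1.2
  rw [this]
end
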